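/- Valuations on the subcomplexes of a simplicial complex that take the value 1 on every simplex (every complete subcomplex) equal the Euler characteristic: if X satisfies X(A ∪ B) + X(A ∩ B) = X(A) + X(B) for all subcomplexes A, B, X(∅)=0, and X(x̄)=1 for the complex generated by each simplex x, then X(H) = χ(H) for every subcomplex H. -/

import Mathlib

/-- A finite abstract simplicial complex on a vertex type `α`: a finite set of
nonempty finite sets (simplices) closed under taking nonempty subsets. -/
def IsSimplicialComplex {α : Type} [DecidableEq α] (K : Finset (Finset α)) : Prop :=
  (∀ s ∈ K, s.Nonempty) ∧ ∀ s ∈ K, ∀ t ⊆ s, t.Nonempty → t ∈ K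

/-- The Barycentric refinement of a finite abstract simplicial complex `K`:
the graph whose vertices are the simplices of `K`, two simplices being
adjacent iff one is a proper subset of the other. -/
def barycentric {α : Type} [DecidableEq α] (K : Finset (Finset α)) :
    SimpleGraph {s : Finset α // s ∈ K} where
  Adj x y := x.1 ⊂ y.1 ∨ y.1 ⊂ x.1
  symm := ⟨by intro x y h; tauto⟩
  loopless := ⟨by intro x h; rcases h with h | h <;> exact (lt_irrefl _ h)⟩

/-!
The Euler characteristic `χ` is itself a valuation (inclusion–exclusion for finite sums), and
`χ(x̄) = 1` because the alternating sum `Σ_{y ⊆ x} (-1)^|y|` vanishes for nonempty `x`. Hence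
`X - χ` is a valuation vanishing on `∅` and on every `x̄`, and such a valuation vanishes on every
subcomplex `H`: for a maximal simplex `x` of `H`, `H = (H \ {x}) ∪ x̄` and
`(H \ {x}) ∩ x̄ = x̄ \ {x}`, both subcomplexes with fewer simplices than `H`.
-/

open Finset

section

variable {α : Type}

def simplexClosure (x : Finset α) : Finset (Finset α) := x.powerset.filter Finset.Nonempty

def eulerChar (H : Finset (Finset α)) : ℝ := ∑ y ∈ H, (-1 : ℝ) ^ (y.card - 1)

lemma mem_simplexClosure {x y : Finset α} : y ∈ simplexClosure x ↔ y ⊆ x ∧ y.Nonempty := by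
  simp [simplexClosure]

variable [DecidableEq α]

lemma simplexClosure_eq_erase_empty (x : Finset α) : simplexClosure x = x.powerset.erase ∅ := by
  ext y
  simp [mem_simplexClosure, nonempty_iff_ne_empty, and_comm]

lemma eulerChar_simplexClosure {x : Finset α} (hx : x.Nonempty) :
    eulerChar (simplexClosure x) = 1 := by
  have hpowerset : ∑ y ∈ x.powerset, (-1 : ℝ) ^ y.card = 0 := by
    exact_mod_cast sum_powerset_neg_one_pow_card_of_nonempty hx
  have hshift : ∀ y ∈ simplexClosure x, (-1 : ℝ) ^ (y.card - 1) = -(-1) ^ y.card := by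
    intro y hy
    rw [← Nat.sub_add_cancel (mem_simplexClosure.1 hy).2.card_pos, pow_succ]
    simp
  rw [eulerChar, sum_congr rfl hshift, sum_neg_distrib, simplexClosure_eq_erase_empty,
    sum_erase_eq_sub (empty_mem_powerset x), hpowerset]
  simp

lemma eulerChar_union_add_inter (A B : Finset (Finset α)) :
    eulerChar (A ∪ B) + eulerChar (A ∩ B) = eulerChar A + eulerChar B :=
  sum_union_inter

lemma isSimplicialComplex_simplexClosure (x : Finset α) : IsSimplicialComplex (simplexClosure x) :=
  ⟨fun _ hs => (mem_simplexClosure.1 hs).2, fun _ hs _ hts ht =>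
    mem_simplexClosure.2 ⟨hts.trans (mem_simplexClosure.1 hs).1, ht⟩⟩

namespace IsSimplicialComplex

variable {K : Finset (Finset α)} {x : Finset α}

lemma simplexClosure_subset (hK : IsSimplicialComplex K) (hx : x ∈ K) : simplexClosure x ⊆ K :=
  fun _ hy => hK.2 x hx _ (mem_simplexClosure.1 hy).1 (mem_simplexClosure.1 hy).2

lemma erase_of_maximal (hK : IsSimplicialComplex K) (hx : Maximal (· ∈ K) x) :
    IsSimplicialComplex (K.erase x) := by
  refine ⟨fun s hs => hK.1 s (mem_of_mem_erase hs), fun s hs t hts ht =>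
    mem_erase.2 ⟨?_, hK.2 s (mem_of_mem_erase hs) t hts ht⟩⟩
  rintro rfl
  exact ne_of_mem_erase hs (hx.eq_of_le (mem_of_mem_erase hs) hts).symm

end IsSimplicialComplex

def IsValuation (G : Finset (Finset α)) (X : Finset (Finset α) → ℝ) : Prop :=
  (∀ A B : Finset (Finset α), A ⊆ G → B ⊆ G → IsSimplicialComplex A → IsSimplicialComplex B →
    X (A ∪ B) + X (A ∩ B) = X A + X B) ∧ X ∅ = 0

lemma isValuation_eulerChar (G : Finset (Finset α)) : IsValuation G eulerChar :=
  ⟨fun A B _ _ _ _ => eulerChar_union_add_inter A B, sum_empty⟩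

namespace IsValuation

variable {G : Finset (Finset α)} {X Y : Finset (Finset α) → ℝ}

lemma sub (hX : IsValuation G X) (hY : IsValuation G Y) : IsValuation G (X - Y) := by
  refine ⟨fun A B hA hB hAc hBc => ?_, by simp [hX.2, hY.2]⟩
  simp only [Pi.sub_apply]
  linarith [hX.1 A B hA hB hAc hBc, hY.1 A B hA hB hAc hBc]

lemma eq_zero_of_simplexClosure (hY : IsValuation G Y)
    (hsimplex : ∀ x ∈ G, x.Nonempty → Y (simplexClosure x) = 0) {H : Finset (Finset α)}
    (hHG : H ⊆ G) (hH : IsSimplicialComplex H) : Y H = 0 := by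
  induction H using Finset.strongInduction with
  | _ H ih =>
  obtain rfl | hne := H.eq_empty_or_nonempty
  · exact hY.2
  obtain ⟨x, hx⟩ := H.exists_maximal hne
  set A := H.erase x
  set B := simplexClosure x
  have hxB : x ∈ B := mem_simplexClosure.2 ⟨subset_rfl, hH.1 x hx.1⟩
  have hBH : B ⊆ H := hH.simplexClosure_subset hx.1
  have hAH : A ⊂ H := erase_ssubset hx.1
  have hBA : B.erase x ⊆ A := erase_subset_erase x hBH
  have hA : IsSimplicialComplex A := hH.erase_of_maximal hx
  have hB : IsSimplicialComplex B := isSimplicialComplex_simplexClosure x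
  have hBx : IsSimplicialComplex (B.erase x) :=
    hB.erase_of_maximal ⟨hxB, fun _ hy _ => (mem_simplexClosure.1 hy).1⟩
  have hunion : A ∪ B = H := by rw [erase_union_of_mem hxB, union_eq_left.2 hBH]
  have hinter : A ∩ B = B.erase x := by rw [erase_inter, inter_eq_right.2 hBH]
  have hmodular := hY.1 A B (hAH.subset.trans hHG) (hBH.trans hHG) hA hB
  rw [hunion, hinter, ih A hAH (hAH.subset.trans hHG) hA,
    ih (B.erase x) (hBA.trans_ssubset hAH) (hBA.trans (hAH.subset.trans hHG)) hBx,
    hsimplex x (hHG hx.1) (hH.1 x hx.1)] at hmodular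
  linarith

end IsValuation

end

theorem valuation_eq_eulerChar_general {α : Type} [DecidableEq α]
    (G : Finset (Finset α))
    (X : Finset (Finset α) → ℝ)
    (hval : ∀ A B : Finset (Finset α), A ⊆ G → B ⊆ G →
      IsSimplicialComplex A → IsSimplicialComplex B →
      X (A ∪ B) + X (A ∩ B) = X A + X B)
    (hempty : X ∅ = 0)
    (hsimplex : ∀ x ∈ G, X (x.powerset.filter Finset.Nonempty) = 1) :
    ∀ H : Finset (Finset α), H ⊆ G → IsSimplicialComplex H →
      X H = ∑ y ∈ H, (-1 : ℝ) ^ (y.card - 1) := by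
  intro H hHG hH
  have hdiff : IsValuation G (X - eulerChar) :=
    IsValuation.sub ⟨hval, hempty⟩ (isValuation_eulerChar G)
  refine sub_eq_zero.1 (hdiff.eq_zero_of_simplexClosure (fun x hx hne => ?_) hHG hH)
  rw [Pi.sub_apply, eulerChar_simplexClosure hne, sub_eq_zero]
  exact hsimplex x hx

/-- A valuation on the subcomplexes of a finite abstract simplicial complex `G`
(a map satisfying `X(A ∪ B) + X(A ∩ B) = X(A) + X(B)` and `X(∅) = 0`) which
takes the value `1` on the complex generated by every simplex of `G` equals the
Euler characteristic `χ(H) = Σ_{y ∈ H} (-1)^{dim y}` on every subcomplex `H`. -/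
theorem valuation_eq_eulerChar {α : Type} [DecidableEq α]
    (G : Finset (Finset α)) (hG : IsSimplicialComplex G)
    (X : Finset (Finset α) → ℝ)
    (hval : ∀ A B : Finset (Finset α), A ⊆ G → B ⊆ G →
      IsSimplicialComplex A → IsSimplicialComplex B →
      X (A ∪ B) + X (A ∩ B) = X A + X B)
    (hempty : X ∅ = 0)
    (hsimplex : ∀ x ∈ G, X (x.powerset.filter Finset.Nonempty) = 1) :
    ∀ H : Finset (Finset α), H ⊆ G → IsSimplicialComplex H →
      X H = ∑ y ∈ H, (-1 : ℝ) ^ (y.card - 1) :=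
  valuation_eq_eulerChar_general G X hval hempty hsimplex
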